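/- arXiv:math/0212108 — 4 statements merged into one kernel-verified Lean document; each statement's English description precedes it below -/
import Mathlib

section
/- Let G be a finite group of odd order and let K be its K-set. Then for all elements a, b of G, the commutator [a,b] belongs to K. -/
/-!
In a group of odd order no non-identity element is its own inverse, so the non-identity
elements split into pairs `{g, g⁻¹}`. Listing each pair as `g, g⁻¹` gives a product `1`.
If `a, b, a⁻¹, b⁻¹` are four distinct non-identity elements, put them first, in this order,
and pair off the remaining elements: the product is `a b a⁻¹ b⁻¹ = ⁅a, b⁆`. Otherwise
`⁅a, b⁆ = 1`, which is the product of the pairing of all non-identity elements.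
-/

/-- The K-set of a group `G`: the set of all elements expressible as a product,
taken in some order, of all the non-identity elements of `G`, each occurring
exactly once. -/
def KSet (G : Type*) [Group G] : Set G :=
  {x | ∃ l : List G, l.Nodup ∧ (∀ g : G, g ∈ l ↔ g ≠ 1) ∧ l.prod = x}

open scoped commutatorElement

section

variable {G : Type*} [Group G]

lemma inv_ne_self_of_odd_natCard (hG : Odd (Nat.card G)) {g : G} (hg : g ≠ 1) : g⁻¹ ≠ g := by
  intro h
  apply hg
  have hsq : g ^ 2 = 1 ^ 2 := by rw [one_pow, sq, ← inv_eq_iff_mul_eq_one, h]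
  exact (Nat.Coprime.pow_left_bijective hG.coprime_two_right).injective hsq

lemma Finset.exists_nodup_toFinset_prod_eq_one [DecidableEq G] (s : Finset G)
    (hinv : ∀ g ∈ s, g⁻¹ ∈ s) (hne : ∀ g ∈ s, g⁻¹ ≠ g) :
    ∃ l : List G, l.Nodup ∧ l.toFinset = s ∧ l.prod = 1 := by
  induction s using Finset.strongInduction with
  | H s ih =>
    rcases s.eq_empty_or_nonempty with rfl | ⟨g, hg⟩
    · exact ⟨[], List.nodup_nil, rfl, List.prod_nil⟩
    set t := (s.erase g).erase g⁻¹
    have hg' : g⁻¹ ∈ s.erase g := Finset.mem_erase.mpr ⟨hne g hg, hinv g hg⟩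
    have hts : t ⊂ s := (Finset.erase_ssubset hg').trans (Finset.erase_ssubset hg)
    have hmem_t : ∀ x, x ∈ t ↔ x ≠ g⁻¹ ∧ x ≠ g ∧ x ∈ s := by simp [t]
    obtain ⟨l, hnd, hl, hprod⟩ := ih t hts
      (fun x hx => by
        obtain ⟨hx₁, hx₂, hx₃⟩ := (hmem_t x).mp hx
        exact (hmem_t x⁻¹).mpr ⟨inv_injective.ne hx₂, fun h => hx₁ (inv_eq_iff_eq_inv.mp h),
          hinv x hx₃⟩)
      (fun x hx => hne x (hts.subset hx))
    refine ⟨g :: g⁻¹ :: l, ?_, ?_, by simp [hprod]⟩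
    · have hgl : g ∉ l := by simp [← List.mem_toFinset, hl, t]
      have hgl' : g⁻¹ ∉ l := by simp [← List.mem_toFinset, hl, t]
      simp [hnd, hgl, hgl', (hne g hg).symm]
    · rw [List.toFinset_cons, List.toFinset_cons, hl, Finset.insert_erase hg',
        Finset.insert_erase hg]

lemma List.prod_mem_KSet [Fintype G] (hG : Odd (Nat.card G)) {t : List G} (ht : t.Nodup)
    (ht_one : ∀ g ∈ t, g ≠ 1) (ht_inv : ∀ g ∈ t, g⁻¹ ∈ t) : t.prod ∈ KSet G := by
  classical
  set s := Finset.univ.filter fun g : G => g ≠ 1 ∧ g ∉ t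
  obtain ⟨l, hnd, hl, hprod⟩ := s.exists_nodup_toFinset_prod_eq_one
    (fun g hg => by
      simp only [s, Finset.mem_filter, Finset.mem_univ, true_and] at hg ⊢
      exact ⟨inv_ne_one.mpr hg.1, fun h => hg.2 (inv_inv g ▸ ht_inv _ h)⟩)
    (fun g hg => inv_ne_self_of_odd_natCard hG (Finset.mem_filter.mp hg).2.1)
  have hmem_l : ∀ g, g ∈ l ↔ g ≠ 1 ∧ g ∉ t := by simp [← List.mem_toFinset, hl, s]
  refine ⟨t ++ l, List.nodup_append.mpr ⟨ht, hnd, ?_⟩, fun g => ?_, by simp [hprod]⟩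
  · intro x hxt y hyl hxy
    exact ((hmem_l y).mp hyl).2 (hxy ▸ hxt)
  · rw [List.mem_append, hmem_l]
    by_cases hgt : g ∈ t
    · simp [hgt, ht_one g hgt]
    · simp [hgt]

lemma commutatorElement_eq_one_of_eq {a b : G} (h : a = 1 ∨ b = 1 ∨ a = b ∨ a = b⁻¹) :
    ⁅a, b⁆ = 1 := by
  rcases h with rfl | rfl | rfl | rfl <;> simp [commutatorElement_def]

end

theorem commutator_mem_KSet (G : Type*) [Group G] [Fintype G]
    (hG : Odd (Fintype.card G)) (a b : G) :
    ⁅a, b⁆ ∈ KSet G := by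
  have hG' : Odd (Nat.card G) := Nat.card_eq_fintype_card (α := G) ▸ hG
  by_cases hdeg : a = 1 ∨ b = 1 ∨ a = b ∨ a = b⁻¹
  · rw [commutatorElement_eq_one_of_eq hdeg, ← List.prod_nil]
    exact List.prod_mem_KSet hG' List.nodup_nil (by simp) (by simp)
  push Not at hdeg
  obtain ⟨ha, hb, hab, hab'⟩ := hdeg
  have hcomm : ⁅a, b⁆ = [a, b, a⁻¹, b⁻¹].prod := by simp [commutatorElement_def, mul_assoc]
  rw [hcomm]
  refine List.prod_mem_KSet hG' ?_ (by simp [ha, hb]) (by simp)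
  have hba : b ≠ a⁻¹ := fun h => hab' (by rw [h, inv_inv])
  simp [hab, hab', hba, (inv_ne_self_of_odd_natCard hG' ha).symm,
    (inv_ne_self_of_odd_natCard hG' hb).symm]
end

section
/- Let G be a finite group of odd order and let K be its K-set. Then the identity element of G belongs to K. -/
private lemma ne_inv_of_odd {G : Type*} [Group G] [Fintype G]
    (hG : Odd (Fintype.card G)) {a : G} (ha : a ≠ 1) : a ≠ a⁻¹ := by
  intro h
  have h2 : a ^ 2 = 1 := by
    rw [pow_two]; nth_rewrite 2 [h]; exact mul_inv_cancel a
  have hord : orderOf a ∣ 2 := orderOf_dvd_of_pow_eq_one h2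
  rcases (Nat.dvd_prime Nat.prime_two).mp hord with h' | h'
  · exact ha (orderOf_eq_one_iff.mp h')
  · have : (2 : ℕ) ∣ Fintype.card G := h' ▸ orderOf_dvd_card
    exact (Nat.not_even_iff_odd.mpr hG) ((even_iff_two_dvd).mpr this)

private lemma aux_list {G : Type*} [Group G] [Fintype G] [DecidableEq G]
    (hG : Odd (Fintype.card G)) :
    ∀ S : Finset G, (∀ a ∈ S, a⁻¹ ∈ S) → (1 : G) ∉ S →
      ∃ l : List G, l.Nodup ∧ (∀ g : G, g ∈ l ↔ g ∈ S) ∧ l.prod = 1 := by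
  intro S
  induction S using Finset.strongInduction with
  | _ S ih =>
    intro hinv h1
    rcases S.eq_empty_or_nonempty with rfl | ⟨a, ha⟩
    · exact ⟨[], List.nodup_nil, by simp, rfl⟩
    · have ha1 : a ≠ 1 := fun h => h1 (h ▸ ha)
      have hainv : a⁻¹ ∈ S := hinv a ha
      have hne : a ≠ a⁻¹ := ne_inv_of_odd hG ha1
      set S' := S \ {a, a⁻¹} with hS'
      have hsub : S' ⊂ S := by
        refine Finset.ssubset_iff_of_subset (Finset.sdiff_subset) |>.mpr ⟨a, ha, ?_⟩
        simp [hS']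
      obtain ⟨l, hnd, hmem, hprod⟩ := ih S' hsub
        (fun b hb => by
          simp only [hS', Finset.mem_sdiff, Finset.mem_insert, Finset.mem_singleton] at hb ⊢
          push_neg at hb ⊢
          refine ⟨hinv b hb.1, ?_, ?_⟩
          · intro h; exact hb.2.2 (by rw [← h, inv_inv])
          · intro h; exact hb.2.1 (by rw [← inv_inv b, h, inv_inv]))
        (by simp [hS', h1])
      refine ⟨a :: a⁻¹ :: l, ?_, ?_, ?_⟩
      · refine List.nodup_cons.mpr ⟨?_, List.nodup_cons.mpr ⟨?_, hnd⟩⟩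
        · simp only [List.mem_cons]
          push_neg
          refine ⟨hne, fun h => ?_⟩
          have := (hmem a).mp h
          simp [hS'] at this
        · intro h
          have := (hmem a⁻¹).mp h
          simp [hS'] at this
      · intro g
        simp only [List.mem_cons, hmem, hS', Finset.mem_sdiff, Finset.mem_insert,
          Finset.mem_singleton]
        constructor
        · rintro (rfl | rfl | ⟨h, _⟩)
          · exact ha
          · exact hainv
          · exact h
        · intro hg
          by_cases h1' : g = a
          · exact Or.inl h1'
          · by_cases h2' : g = a⁻¹
            · exact Or.inr (Or.inl h2')
            · exact Or.inr (Or.inr ⟨hg, by push_neg; exact ⟨h1', h2'⟩⟩)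
      · simp [hprod]

theorem one_mem_KSet (G : Type*) [Group G] [Fintype G]
    (hG : Odd (Fintype.card G)) :
    (1 : G) ∈ KSet G := by
  classical
  obtain ⟨l, hnd, hmem, hprod⟩ := aux_list hG (Finset.univ \ {1})
    (fun a ha => by simpa using (by simpa using ha : a ≠ 1))
    (by simp)
  exact ⟨l, hnd, fun g => by simpa using hmem g, hprod⟩
end

section
/- Let G be a finite group of odd order and let K be its K-set. Then K is contained in the commutator subgroup (commutant) of G. -/
section

variable {G M : Type*} [Group G] [Fintype G]

theorem map_eq_prod_univ_of_mem_KSet [CommMonoid M] (f : G →* M) {x : G} (hx : x ∈ KSet G) :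
    f x = ∏ g, f g := by
  classical
  obtain ⟨l, hnd, hmem, rfl⟩ := hx
  have hl : l.toFinset = Finset.univ.erase 1 := by
    ext g
    simp [hmem]
  rw [← Finset.mul_prod_erase _ _ (Finset.mem_univ 1), map_one, one_mul, ← hl,
    List.prod_toFinset _ hnd, ← List.prod_hom]

variable [CommGroup M] (f : G →* M)

theorem inv_prod_univ_map : (∏ g, f g)⁻¹ = ∏ g, f g := by
  rw [← Finset.prod_inv_distrib]
  exact Fintype.prod_equiv (Equiv.inv G) _ _ fun g => by simp

theorem prod_univ_map_pow_card : (∏ g, f g) ^ Fintype.card G = 1 := by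
  simp_rw [← Finset.prod_pow, ← map_pow, pow_card_eq_one, map_one, Finset.prod_const_one]

theorem prod_univ_map_eq_one_of_odd_card (hG : Odd (Fintype.card G)) : ∏ g, f g = 1 := by
  have hsq : (∏ g, f g) ^ 2 = 1 := by
    rw [sq]
    nth_rewrite 1 [← inv_prod_univ_map]
    exact inv_mul_cancel _
  simpa [Nat.coprime_two_left.mpr hG] using pow_gcd_eq_one.mpr ⟨hsq, prod_univ_map_pow_card f⟩

end

theorem KSet_subset_commutator (G : Type*) [Group G] [Fintype G]
    (hG : Odd (Fintype.card G)) :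
    KSet G ⊆ (commutator G : Subgroup G) := by
  intro x hx
  rw [SetLike.mem_coe, ← QuotientGroup.eq_one_iff]
  exact (map_eq_prod_univ_of_mem_KSet Abelianization.of hx).trans
    (prod_univ_map_eq_one_of_odd_card _ hG)
end

section
/- For the symmetric group S₃ on three letters, the K-set of S₃ (the set of all products, in some order, of all five non-identity elements of S₃, each occurring exactly once) does not coincide with the underlying set of the commutator subgroup of S₃. -/
/-- An explicit list of the five non-identity elements of `S₃`. -/
def S3list : List (Equiv.Perm (Fin 3)) :=
  [Equiv.swap 0 1, Equiv.swap 0 2, Equiv.swap 1 2,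
   Equiv.swap 0 1 * Equiv.swap 1 2, Equiv.swap 1 2 * Equiv.swap 0 1]

theorem KSet_S3_ne_commutator :
    KSet (Equiv.Perm (Fin 3)) ≠ (commutator (Equiv.Perm (Fin 3)) : Set (Equiv.Perm (Fin 3))) := by
  intro h
  have h1 : (1 : Equiv.Perm (Fin 3)) ∈ KSet (Equiv.Perm (Fin 3)) := by
    rw [h]; exact Subgroup.one_mem _
  obtain ⟨l, hnd, hmem, hprod⟩ := h1
  have hnd' : S3list.Nodup := by decide
  have hmem' : ∀ g : Equiv.Perm (Fin 3), g ∈ S3list ↔ g ≠ 1 := by decide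
  have hperm : l.Perm S3list := by
    apply List.perm_of_nodup_nodup_toFinset_eq hnd hnd'
    ext g
    simp [hmem g, hmem' g]
  have hsign : Equiv.Perm.sign l.prod = (l.map Equiv.Perm.sign).prod :=
    map_list_prod Equiv.Perm.sign l
  have heq : (l.map Equiv.Perm.sign).prod = (S3list.map Equiv.Perm.sign).prod :=
    (hperm.map Equiv.Perm.sign).prod_eq
  have hval : (S3list.map Equiv.Perm.sign).prod = -1 := by decide
  rw [hprod, heq, hval] at hsign
  simp at hsign
end
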